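/- arXiv:2508.07983 — 3 statements merged into one kernel-verified Lean document; each statement's English description precedes it below -/
import Mathlib

section
/- For f in Cvx₀(ℝⁿ) (nonnegative, even, convex, f(0)=0) and its polar transform f°(x) = sup_y (⟨x,y⟩ − 1)/f(y), it holds for all λ > 0 that {f° > λ} = λ · {Lf > 1/λ}, where Lf is the Legendre transform of f. -/
open Set Pointwise MeasureTheory
open scoped Classical

/-- Ratio `a / b` with the conventions `0/0 = 0` (more generally `a/0 = 0` for `a ≤ 0`)
and `a/0 = +∞` for `a > 0`, valued in `EReal`. -/
noncomputable def eratio (a b : ℝ) : EReal :=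
  if b = 0 then (if 0 < a then (⊤ : EReal) else 0) else ((a / b : ℝ) : EReal)

/-- Legendre transform `Lf(x) = sup_y (⟨x,y⟩ − f(y))`, valued in `EReal`. -/
noncomputable def legendre {n : ℕ} (f : EuclideanSpace ℝ (Fin n) → ℝ)
    (x : EuclideanSpace ℝ (Fin n)) : EReal :=
  ⨆ y : EuclideanSpace ℝ (Fin n), ((inner ℝ x y - f y : ℝ) : EReal)

/-- Polar transform `f°(x) = sup_y (⟨x,y⟩ − 1)/f(y)` (with `0° = 0`). -/
noncomputable def polarTransform {n : ℕ} (f : EuclideanSpace ℝ (Fin n) → ℝ)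
    (x : EuclideanSpace ℝ (Fin n)) : EReal :=
  if f = fun _ => (0 : ℝ) then 0
  else ⨆ y : EuclideanSpace ℝ (Fin n), eratio (inner ℝ x y - 1) (f y)

/-
For `λ > 0` both superlevel conditions unfold to the same inequality: `λ < f°(x)` means
`λ f(y) < ⟨x,y⟩ - 1` for some `y` (this is where `f ≥ 0` and the conventions for `c/0` enter),
and `1/λ < Lf(x/λ)` means `1/λ < ⟨x,y⟩/λ - f(y)` for some `y`, which is the same after
multiplying by `λ`.
-/

lemma coe_lt_eratio_iff {c a b : ℝ} (hc : 0 ≤ c) (hb : 0 ≤ b) :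
    (c : EReal) < eratio a b ↔ c * b < a := by
  unfold eratio
  split_ifs with hb0 ha
  · simp [hb0, ha]
  · simp [hb0, ha, hc]
  · rw [EReal.coe_lt_coe_iff, lt_div_iff₀ (lt_of_le_of_ne hb (Ne.symm hb0))]

section

variable {n : ℕ} {f : EuclideanSpace ℝ (Fin n) → ℝ}

lemma coe_lt_polarTransform_iff (hnonneg : ∀ x, 0 ≤ f x) (hfne : f ≠ fun _ => (0 : ℝ))
    {c : ℝ} (hc : 0 ≤ c) (x : EuclideanSpace ℝ (Fin n)) :
    (c : EReal) < polarTransform f x ↔ ∃ y, c * f y < inner ℝ x y - 1 := by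
  simp only [polarTransform, if_neg hfne, lt_iSup_iff, coe_lt_eratio_iff hc (hnonneg _)]

lemma coe_lt_legendre_iff (c : ℝ) (x : EuclideanSpace ℝ (Fin n)) :
    (c : EReal) < legendre f x ↔ ∃ y, c < inner ℝ x y - f y := by
  simp only [legendre, lt_iSup_iff, EReal.coe_lt_coe_iff]

end

lemma one_div_lt_inv_mul_sub_iff {lam a b : ℝ} (hlam : 0 < lam) :
    1 / lam < lam⁻¹ * a - b ↔ lam * b < a - 1 := by
  rw [← mul_lt_mul_iff_of_pos_left hlam, mul_sub, ← mul_assoc, mul_inv_cancel₀ hlam.ne',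
    mul_one_div_cancel hlam.ne', one_mul]
  constructor <;> intro h <;> linarith

theorem polarTransform_superlevel_eq_smul_general {n : ℕ}
    (f : EuclideanSpace ℝ (Fin n) → ℝ)
    (hnonneg : ∀ x, 0 ≤ f x)
    (hfne : f ≠ fun _ => (0 : ℝ)) (lam : ℝ) (hlam : 0 < lam) :
    {x | (lam : EReal) < polarTransform f x} =
      lam • {x | ((1 / lam : ℝ) : EReal) < legendre f x} := by
  ext x
  rw [mem_smul_set_iff_inv_smul_mem₀ hlam.ne', mem_ofPred_eq, mem_ofPred_eq,
    coe_lt_polarTransform_iff hnonneg hfne hlam.le, coe_lt_legendre_iff]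
  simp only [real_inner_smul_left, one_div_lt_inv_mul_sub_iff hlam]

theorem polarTransform_superlevel_eq_smul {n : ℕ}
    (f : EuclideanSpace ℝ (Fin n) → ℝ) (hconv : ConvexOn ℝ Set.univ f)
    (heven : ∀ x, f (-x) = f x) (hnonneg : ∀ x, 0 ≤ f x) (hf0 : f 0 = 0)
    (hfne : f ≠ fun _ => (0 : ℝ)) (lam : ℝ) (hlam : 0 < lam) :
    {x | (lam : EReal) < polarTransform f x} =
      lam • {x | ((1 / lam : ℝ) : EReal) < legendre f x} :=
  polarTransform_superlevel_eq_smul_general f hnonneg hfne lam hlam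
end

section
/- The set S of probability-type densities, namely measures on [0,∞) with density e^{-Ψ} where Ψ is convex, non-decreasing, Ψ(0) = 0, and ∫₀^∞ e^{-Ψ(r)} r^{n-1} dr = 1, is uniformly tight: for every ε > 0 there is b > 0 such that ∫_b^∞ e^{-Ψ(r)} dr < ε for all such Ψ. -/
/-!
A density `e^{-Ψ} r^k` of total mass one with `Ψ` non-decreasing has mass at least
`e^{-Ψ 2} 2^{k+1} / (k+1)` on `(0, 2]`, so `Ψ 2 ≥ log (2^{k+1} / (k+1)) > 0`. As `Ψ` is convex
with `Ψ 0 = 0`, `Ψ r / r` is non-decreasing, hence `Ψ r ≥ a r` for `r ≥ 2` with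
`a = log (2^{k+1} / (k+1)) / 2` independent of `Ψ`, and the tails of `e^{-Ψ}` are dominated
by those of `e^{-a r}`.
-/

open Set MeasureTheory Filter

namespace Real

theorem integral_exp_neg_mul_Ioi {a : ℝ} (ha : 0 < a) (c : ℝ) :
    ∫ x in Ioi c, exp (-(a * x)) = exp (-(a * c)) / a := by
  simpa [neg_mul, neg_div_neg_eq] using integral_exp_mul_Ioi (neg_lt_zero.2 ha) c

theorem exists_ge_exp_neg_mul_div_lt {a : ℝ} (ha : 0 < a) (c : ℝ) {ε : ℝ} (hε : 0 < ε) :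
    ∃ b, c ≤ b ∧ exp (-(a * b)) / a < ε := by
  have hlim : Tendsto (fun b => exp (-(a * b)) / a) atTop (nhds 0) := by
    simpa using (tendsto_exp_neg_atTop_nhds_zero.comp
      (tendsto_id.const_mul_atTop ha)).div_const a
  exact ((eventually_ge_atTop c).and (hlim.eventually_lt_const hε)).exists

end Real

theorem ConvexOn.div_le_div_of_map_zero {Ψ : ℝ → ℝ} (hconv : ConvexOn ℝ (Ici 0) Ψ)
    (hΨ0 : Ψ 0 = 0) {c r : ℝ} (hc : 0 < c) (hcr : c ≤ r) : Ψ c / c ≤ Ψ r / r := by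
  have hr : 0 < r := hc.trans_le hcr
  simpa only [hΨ0, sub_zero] using
    hconv.secant_mono self_mem_Ici hc.le hr.le hc.ne' hr.ne' hcr

theorem integral_Ioc_zero_pow {c : ℝ} (hc : 0 ≤ c) (k : ℕ) :
    ∫ r in Ioc 0 c, r ^ k = c ^ (k + 1) / (k + 1) := by
  rw [← intervalIntegral.integral_of_le hc, integral_pow]
  simp

theorem pow_succ_div_le_exp_of_integral_eq_one {Ψ : ℝ → ℝ} {k : ℕ}
    (hmono : MonotoneOn Ψ (Ici 0))
    (hint : ∫ r in Ioi 0, Real.exp (-Ψ r) * r ^ k = 1) {c : ℝ} (hc : 0 ≤ c) :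
    c ^ (k + 1) / (k + 1) ≤ Real.exp (Ψ c) := by
  have hInt : IntegrableOn (fun r => Real.exp (-Ψ r) * r ^ k) (Ioi 0) :=
    integrable_of_integral_eq_one hint
  have hmass : Real.exp (-Ψ c) * (c ^ (k + 1) / (k + 1)) ≤ 1 :=
    calc Real.exp (-Ψ c) * (c ^ (k + 1) / (k + 1))
        = ∫ r in Ioc 0 c, Real.exp (-Ψ c) * r ^ k := by
          rw [integral_const_mul, integral_Ioc_zero_pow hc k]
      _ ≤ ∫ r in Ioc 0 c, Real.exp (-Ψ r) * r ^ k := by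
          refine setIntegral_mono_on (continuous_const.mul (continuous_pow k)).integrableOn_Ioc
            (hInt.mono_set Ioc_subset_Ioi_self) measurableSet_Ioc fun r hr => ?_
          have hΨr : Ψ r ≤ Ψ c := hmono (mem_Ici.2 hr.1.le) (mem_Ici.2 hc) hr.2
          exact mul_le_mul_of_nonneg_right (Real.exp_le_exp.2 (neg_le_neg hΨr))
            (pow_nonneg hr.1.le k)
      _ ≤ ∫ r in Ioi 0, Real.exp (-Ψ r) * r ^ k :=
          setIntegral_mono_set hInt
            (ae_restrict_of_forall_mem measurableSet_Ioi fun r hr =>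
              mul_nonneg (Real.exp_pos _).le (pow_nonneg (le_of_lt hr) k))
            (Eventually.of_forall Ioc_subset_Ioi_self)
      _ = 1 := hint
  rwa [Real.exp_neg, inv_mul_le_iff₀ (Real.exp_pos _), mul_one] at hmass

noncomputable def tightnessRate (k : ℕ) : ℝ := Real.log (2 ^ (k + 1) / (k + 1)) / 2

theorem tightnessRate_pos (k : ℕ) : 0 < tightnessRate k := by
  have hlt : ((k + 1 : ℕ) : ℝ) < 2 ^ (k + 1) := by exact_mod_cast Nat.lt_two_pow_self
  push_cast at hlt
  exact half_pos (Real.log_pos ((one_lt_div (by positivity)).2 hlt))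

theorem tightnessRate_mul_le {Ψ : ℝ → ℝ} {k : ℕ} (hconv : ConvexOn ℝ (Ici 0) Ψ)
    (hmono : MonotoneOn Ψ (Ici 0)) (hΨ0 : Ψ 0 = 0)
    (hint : ∫ r in Ioi 0, Real.exp (-Ψ r) * r ^ k = 1) {r : ℝ} (hr : 2 ≤ r) :
    tightnessRate k * r ≤ Ψ r := by
  have hΨ2 : 2 * tightnessRate k ≤ Ψ 2 := by
    rw [tightnessRate, mul_div_cancel₀ _ two_ne_zero, Real.log_le_iff_le_exp (by positivity)]
    exact pow_succ_div_le_exp_of_integral_eq_one hmono hint zero_le_two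
  have hslope := hconv.div_le_div_of_map_zero hΨ0 two_pos hr
  rw [← le_div_iff₀ (two_pos.trans_le hr)]
  linarith

theorem integral_Ioi_exp_neg_le {Ψ : ℝ → ℝ} {a b : ℝ} (ha : 0 < a)
    (hΨ : ∀ r ∈ Ioi b, a * r ≤ Ψ r) :
    ∫ r in Ioi b, Real.exp (-Ψ r) ≤ Real.exp (-(a * b)) / a := by
  by_cases hI : IntegrableOn (fun r => Real.exp (-Ψ r)) (Ioi b)
  · rw [← Real.integral_exp_neg_mul_Ioi ha]
    refine setIntegral_mono_on hI ?_ measurableSet_Ioi fun r hr => ?_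
    · simpa only [neg_mul] using exp_neg_integrableOn_Ioi b ha
    · exact Real.exp_le_exp.2 (neg_le_neg (hΨ r hr))
  · rw [integral_undef hI]
    positivity

theorem tightness_of_logconcave_class_general (n : ℕ) :
    ∀ ε : ℝ, 0 < ε → ∃ b : ℝ, 0 < b ∧
      ∀ Ψ : ℝ → ℝ, ConvexOn ℝ (Set.Ici 0) Ψ → MonotoneOn Ψ (Set.Ici 0) →
        (∀ r ∈ Set.Ici (0 : ℝ), 0 ≤ Ψ r) → Ψ 0 = 0 →
        (∫ r in Set.Ioi (0 : ℝ), Real.exp (-Ψ r) * r ^ (n - 1)) = 1 →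
        (∫ r in Set.Ioi b, Real.exp (-Ψ r)) < ε := by
  intro ε hε
  obtain ⟨b, hb2, hbε⟩ :=
    Real.exists_ge_exp_neg_mul_div_lt (tightnessRate_pos (n - 1)) 2 hε
  refine ⟨b, two_pos.trans_le hb2, fun Ψ hconv hmono _ hΨ0 hint => ?_⟩
  refine (integral_Ioi_exp_neg_le (tightnessRate_pos (n - 1)) fun r hr => ?_).trans_lt hbε
  exact tightnessRate_mul_le hconv hmono hΨ0 hint (hb2.trans (le_of_lt hr))

theorem tightness_of_logconcave_class (n : ℕ) (hn : 1 ≤ n) :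
    ∀ ε : ℝ, 0 < ε → ∃ b : ℝ, 0 < b ∧
      ∀ Ψ : ℝ → ℝ, ConvexOn ℝ (Set.Ici 0) Ψ → MonotoneOn Ψ (Set.Ici 0) →
        (∀ r ∈ Set.Ici (0 : ℝ), 0 ≤ Ψ r) → Ψ 0 = 0 →
        (∫ r in Set.Ioi (0 : ℝ), Real.exp (-Ψ r) * r ^ (n - 1)) = 1 →
        (∫ r in Set.Ioi b, Real.exp (-Ψ r)) < ε :=
  tightness_of_logconcave_class_general n
end

section
/- Let V : (0,∞) → ℝ be smooth with V' > 0 and V'' > 0 on (0,∞), with V'(0+) ≥ ε > 0, and such that e^{-V(r)} r^{n+1}/V'(r) → 0 as r → 0+ and r → ∞. Then ∫₀^∞ (1/V''(r) − r² + (n−1)r/V'(r)) e^{-V(r)} r^{n-1} dr = ∫₀^∞ ((rV''(r) − V'(r))² / (V''(r) V'(r)²)) e^{-V(r)} r^{n-1} dr ≥ 0. -/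
open Set MeasureTheory Filter

/-- FTC on `(0, ∞)` with limits at both endpoints. -/
lemma integral_Ioi_zero_of_hasDerivAt_of_tendsto {F F' : ℝ → ℝ} {m M : ℝ}
    (hd : ∀ x ∈ Set.Ioi (0:ℝ), HasDerivAt F (F' x) x)
    (hint : IntegrableOn F' (Set.Ioi 0))
    (h0 : Tendsto F (nhdsWithin 0 (Set.Ioi 0)) (nhds m))
    (htop : Tendsto F atTop (nhds M)) :
    ∫ x in Set.Ioi (0:ℝ), F' x = M - m := by
  set s : ℕ → Set ℝ := fun k => Set.Ioi ((1:ℝ)/(k+1)) with hs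
  have hpos : ∀ k : ℕ, (0:ℝ) < 1/(k+1) := fun k => by positivity
  have hUnion : (⋃ k, s k) = Set.Ioi (0:ℝ) := by
    apply Set.eq_of_subset_of_subset
    · exact Set.iUnion_subset fun k => Set.Ioi_subset_Ioi (hpos k).le
    · intro x hx
      obtain ⟨k, hk⟩ := exists_nat_one_div_lt (show (0:ℝ) < x from hx)
      exact Set.mem_iUnion.2 ⟨k, hk⟩
  have hmono : Monotone s := by
    intro i j hij
    apply Set.Ioi_subset_Ioi
    apply one_div_le_one_div_of_le (by positivity)
    have : (i:ℝ) ≤ j := Nat.cast_le.2 hij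
    linarith
  have h1 : Tendsto (fun k => ∫ x in s k, F' x) atTop (nhds (∫ x in Set.Ioi (0:ℝ), F' x)) := by
    have := tendsto_setIntegral_of_monotone (fun k => measurableSet_Ioi) hmono
      (hUnion ▸ hint)
    rwa [hUnion] at this
  have h2 : ∀ k : ℕ, ∫ x in s k, F' x = M - F (1/(k+1)) := by
    intro k
    apply integral_Ioi_of_hasDerivAt_of_tendsto
    · exact ((hd _ (hpos k)).continuousAt).continuousWithinAt
    · exact fun x hx => hd x (lt_trans (hpos k) hx)
    · exact hint.mono (Set.Ioi_subset_Ioi (hpos k).le) le_rfl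
    · exact htop
  have h3 : Tendsto (fun k : ℕ => (1:ℝ)/(k+1)) atTop (nhdsWithin 0 (Set.Ioi 0)) := by
    apply tendsto_nhdsWithin_of_tendsto_nhds_of_eventually_within
    · exact tendsto_one_div_add_atTop_nhds_zero_nat
    · exact Eventually.of_forall fun k => hpos k
  have h4 : Tendsto (fun k => ∫ x in s k, F' x) atTop (nhds (M - m)) := by
    simp only [h2]
    exact tendsto_const_nhds.sub (h0.comp h3)
  exact tendsto_nhds_unique h1 h4

theorem integration_by_parts_perfect_square (n : ℕ) (hn : 1 ≤ n) (V : ℝ → ℝ)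
    (hsmooth : ContDiffOn ℝ (⊤ : ℕ∞) V (Set.Ioi 0))
    (hV' : ∀ r > (0 : ℝ), 0 < deriv V r)
    (hV'' : ∀ r > (0 : ℝ), 0 < deriv (deriv V) r)
    (ε : ℝ) (hε : 0 < ε) (hV'lb : ∀ r > (0 : ℝ), ε ≤ deriv V r)
    (hdecay0 : Tendsto (fun r => Real.exp (-V r) * r ^ (n + 1) / deriv V r)
      (nhdsWithin 0 (Set.Ioi 0)) (nhds 0))
    (hdecayTop : Tendsto (fun r => Real.exp (-V r) * r ^ (n + 1) / deriv V r)
      atTop (nhds 0))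
    (hint1 : IntegrableOn
      (fun r => (1 / deriv (deriv V) r - r ^ 2 + (n - 1 : ℝ) * r / deriv V r) *
        Real.exp (-V r) * r ^ (n - 1)) (Set.Ioi 0))
    (hint2 : IntegrableOn
      (fun r => (r * deriv (deriv V) r - deriv V r) ^ 2 /
        (deriv (deriv V) r * (deriv V r) ^ 2) * Real.exp (-V r) * r ^ (n - 1))
      (Set.Ioi 0))
    (hint3 : IntegrableOn (fun r => Real.exp (-V r) * r ^ (n + 1)) (Set.Ioi 0)) :
    (∫ r in Set.Ioi (0 : ℝ),
        (1 / deriv (deriv V) r - r ^ 2 + (n - 1 : ℝ) * r / deriv V r) *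
          Real.exp (-V r) * r ^ (n - 1)) =
      (∫ r in Set.Ioi (0 : ℝ),
        (r * deriv (deriv V) r - deriv V r) ^ 2 /
          (deriv (deriv V) r * (deriv V r) ^ 2) * Real.exp (-V r) * r ^ (n - 1)) ∧
    0 ≤ ∫ r in Set.Ioi (0 : ℝ),
        (1 / deriv (deriv V) r - r ^ 2 + (n - 1 : ℝ) * r / deriv V r) *
          Real.exp (-V r) * r ^ (n - 1) := by
  obtain ⟨m, rfl⟩ := Nat.exists_eq_add_of_le hn
  set f : ℝ → ℝ := fun r => (1 / deriv (deriv V) r - r ^ 2 + ((1 + m : ℕ) - 1 : ℝ) * r / deriv V r) *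
        Real.exp (-V r) * r ^ (1 + m - 1) with hf
  set g : ℝ → ℝ := fun r => (r * deriv (deriv V) r - deriv V r) ^ 2 /
        (deriv (deriv V) r * (deriv V r) ^ 2) * Real.exp (-V r) * r ^ (1 + m - 1) with hg
  set F : ℝ → ℝ := fun r => Real.exp (-V r) * r ^ (1 + m + 1) / deriv V r with hF
  -- differentiability facts
  have hVd : ∀ r ∈ Set.Ioi (0:ℝ), HasDerivAt V (deriv V r) r := by
    intro r hr
    exact ((hsmooth.differentiableOn (by simp)).differentiableAt
      (isOpen_Ioi.mem_nhds hr)).hasDerivAt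
  have hVd2 : ∀ r ∈ Set.Ioi (0:ℝ), HasDerivAt (deriv V) (deriv (deriv V) r) r := by
    intro r hr
    exact (((hsmooth.deriv_of_isOpen isOpen_Ioi (by exact WithTop.coe_le_coe.2 le_top)).differentiableOn
      (show (1 : WithTop ℕ∞) ≠ 0 by simp)).differentiableAt (isOpen_Ioi.mem_nhds hr)).hasDerivAt
  -- derivative of F
  have hFd : ∀ r ∈ Set.Ioi (0:ℝ), HasDerivAt F (f r - g r) r := by
    intro r hr
    have hr0 : (0:ℝ) < r := hr
    have h1 : HasDerivAt (fun r => Real.exp (-V r)) (-deriv V r * Real.exp (-V r)) r := by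
      have := ((hVd r hr).neg).exp
      simpa [mul_comm] using this
    have h2 : HasDerivAt (fun r : ℝ => r ^ (1 + m + 1)) ((1 + m + 1 : ℕ) * r ^ (1 + m)) r := by
      simpa using hasDerivAt_pow (1 + m + 1) r
    have h3 := (h1.mul h2).div (hVd2 r hr) (ne_of_gt (hV' r hr0))
    have hv' := hV' r hr0
    have hv'' := hV'' r hr0
    refine h3.congr_deriv ?_
    simp only [hf, hg, Pi.mul_apply, show 1 + m - 1 = m from Nat.add_sub_cancel_left 1 m]
    push_cast
    field_simp
    ring
  -- integrability of f - g
  have hintfg : IntegrableOn (fun r => f r - g r) (Set.Ioi 0) := hint1.sub hint2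
  -- FTC
  have hzero : ∫ r in Set.Ioi (0:ℝ), (f r - g r) = 0 - 0 :=
    integral_Ioi_zero_of_hasDerivAt_of_tendsto hFd hintfg hdecay0 hdecayTop
  have heq : (∫ r in Set.Ioi (0:ℝ), f r) = ∫ r in Set.Ioi (0:ℝ), g r := by
    rw [integral_sub hint1 hint2] at hzero
    linarith
  have hgnn : 0 ≤ ∫ r in Set.Ioi (0:ℝ), g r := by
    apply setIntegral_nonneg measurableSet_Ioi
    intro r hr
    have hr0 : (0:ℝ) < r := hr
    have := hV' r hr0
    have := hV'' r hr0
    positivity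
  exact ⟨heq, heq ▸ hgnn⟩
end
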